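/- Let C be a δ-overlay of two ℝ-graphs X, X' in A_r with δ < r. Then for every (y,y') ∈ C, the pair of core projections (α(y), α(y')) lies in the 2δ-enlargement C_{2δ} of C. -/

import Mathlib

open MeasureTheory
open scoped ENNReal
open Set Metric

/-- Geodesic metric space: any two points are joined by an isometric path. -/
def IsGeodesicSpace (X : Type) [MetricSpace X] : Prop :=
  ∀ x y : X, ∃ f : ℝ → X, f 0 = x ∧ f (dist x y) = y ∧
    ∀ s ∈ Icc (0 : ℝ) (dist x y), ∀ t ∈ Icc (0 : ℝ) (dist x y),
      dist (f s) (f t) = |s - t|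

/-- No embedded cycle: no continuous injective image of the circle. -/
def NoEmbeddedCycle (X : Type) [TopologicalSpace X] : Prop :=
  ¬ ∃ f : AddCircle (1 : ℝ) → X, Continuous f ∧ Function.Injective f

/-- A subset is an ℝ-tree if, in the induced metric, it is an acyclic
geodesic space. -/
def IsRTreeSet {X : Type} [MetricSpace X] (A : Set X) : Prop :=
  IsGeodesicSpace ↥A ∧ NoEmbeddedCycle ↥A

/-- An ℝ-graph: a compact geodesic metric space which is locally an
ℝ-tree. -/
def IsRGraph (X : Type) [MetricSpace X] : Prop :=
  CompactSpace X ∧ IsGeodesicSpace X ∧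
    ∀ x : X, ∃ ε > (0 : ℝ), IsRTreeSet (ball x ε)

/-- An embedded cycle: the range of a continuous injective map from the
circle. -/
def IsEmbCycle {X : Type} [TopologicalSpace X] (c : Set X) : Prop :=
  ∃ f : AddCircle (1 : ℝ) → X, Continuous f ∧ Function.Injective f ∧
    Set.range f = c

/-- The core of `X`: the union of all simple arcs having both endpoints in
embedded cycles of `X`. -/
def core (X : Type) [MetricSpace X] : Set X :=
  {y | ∃ f : ℝ → X, ContinuousOn f (Icc 0 1) ∧ InjOn f (Icc 0 1) ∧
    (∃ c, IsEmbCycle c ∧ f 0 ∈ c) ∧ (∃ c, IsEmbCycle c ∧ f 1 ∈ c) ∧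
    y ∈ f '' Icc 0 1}

/-- The punctured ball of radius `δ` at `x`, relative to `Y`. -/
def punctured {X : Type} [MetricSpace X] (Y : Set X) (x : X) (δ : ℝ) : Set X :=
  (ball x δ ∩ Y) \ {x}

/-- `x` has degree `n` in `Y ⊆ X`: for all small enough `δ`, the punctured
ball `(B_δ(x) ∩ Y) \ {x}` has exactly `n` connected components. -/
def HasDegreeIn {X : Type} [MetricSpace X] (Y : Set X) (x : X) (n : ℕ∞) : Prop :=
  ∃ ε > (0 : ℝ), ∀ δ ∈ Ioc (0 : ℝ) ε,
    ENat.card (ConnectedComponents ↥(punctured Y x δ)) = n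

/-- `x` has degree at least `m` in `Y ⊆ X`. -/
def DegreeAtLeast {X : Type} [MetricSpace X] (Y : Set X) (x : X) (m : ℕ∞) : Prop :=
  ∃ ε > (0 : ℝ), ∀ δ ∈ Ioc (0 : ℝ) ε,
    m ≤ ENat.card (ConnectedComponents ↥(punctured Y x δ))

/-- `X` contains at least `n` independent embedded cycles. -/
def HasSurplusAtLeast (X : Type) [MetricSpace X] (n : ℕ) : Prop :=
  ∃ c : Fin n → Set X, (∀ i, IsEmbCycle (c i)) ∧
    ∀ i : Fin n, ¬ (c i ⊆ ⋃ j : Fin n, ⋃ (_ : j < i), c j)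

/-- The surplus of `X` is exactly `n`: the maximal number of independent
embedded cycles. -/
def HasSurplus (X : Type) [MetricSpace X] (n : ℕ) : Prop :=
  HasSurplusAtLeast X n ∧ ¬ HasSurplusAtLeast X (n + 1)

/-- A correspondence between `X` and `X'`. -/
def IsCorrespondence {X X' : Type} (C : Set (X × X')) : Prop :=
  (∀ x : X, ∃ x' : X', (x, x') ∈ C) ∧ ∀ x' : X', ∃ x : X, (x, x') ∈ C

/-- The distortion of `C`, in `ℝ≥0∞`. -/
noncomputable def distortion {X X' : Type} [MetricSpace X] [MetricSpace X']
    (C : Set (X × X')) : ℝ≥0∞ :=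
  ⨆ p ∈ C, ⨆ q ∈ C,
    (edist p.1 q.1 - edist p.2 q.2) ⊔ (edist p.2 q.2 - edist p.1 q.1)

/-- The `r`-enlargement of `C`. -/
def enlargement {X X' : Type} [MetricSpace X] [MetricSpace X']
    (C : Set (X × X')) (r : ℝ) : Set (X × X') :=
  {q | ∃ p ∈ C, dist p.1 q.1 ≤ r ∧ dist p.2 q.2 ≤ r}

/-- `X ∈ A_r`: surplus at most `1/r`, total core length at most `1/r`, and
every kernel edge (simple arc in the core joining branchpoints, with no
interior branchpoint) has length at least `r`. -/
def InAr (X : Type) [MetricSpace X] [MeasurableSpace X] [BorelSpace X]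
    (r : ℝ) : Prop :=
  ¬ HasSurplusAtLeast X (⌊1 / r⌋₊ + 1) ∧
  Measure.hausdorffMeasure 1 (core X) ≤ ENNReal.ofReal (1 / r) ∧
  ∀ (f : ℝ → X) (a b : ℝ), a < b → ContinuousOn f (Icc a b) →
    InjOn f (Icc a b) → f '' Icc a b ⊆ core X →
    DegreeAtLeast Set.univ (f a) 3 → DegreeAtLeast Set.univ (f b) 3 →
    (∀ t ∈ Ioo a b, HasDegreeIn Set.univ (f t) 2) →
    ENNReal.ofReal r ≤ eVariationOn f (Icc a b)

/-- `C` is a `δ`-overlay of `X` and `X'`: a correspondence of distortion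
less than `δ` matching branchpoints with branchpoints and putting the cores
in correspondence. -/
def IsOverlay {X X' : Type} [MetricSpace X] [MetricSpace X']
    (δ : ℝ) (C : Set (X × X')) : Prop :=
  IsCorrespondence C ∧ distortion C < ENNReal.ofReal δ ∧
  (∀ y ∈ core X, ∃ y' ∈ core X', (y, y') ∈ C) ∧
  (∀ y' ∈ core X', ∃ y ∈ core X, (y, y') ∈ C) ∧
  (∀ v : X, DegreeAtLeast Set.univ v 3 →
    ∃ v' : X', DegreeAtLeast Set.univ v' 3 ∧ (v, v') ∈ C) ∧
  (∀ v' : X', DegreeAtLeast Set.univ v' 3 →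
    ∃ v : X, DegreeAtLeast Set.univ v 3 ∧ (v, v') ∈ C)


/-! Call an arc *core* if its ends lie on embedded cycles. An arc `m` whose ends lie on one or
two core arcs and which meets them only at its ends lies in the core: following the core arcs
outward from the ends of `m` (rerouting once through the second arc where they cross) extends
`m` to a core arc. Hence if `z` is a nearest core point to `y` and `v` is in the core, the
geodesics from `y` to `z` and to `v` part at a point `b` joined to the core by two arcs meeting
only at `b`, so `b` is in the core; as `d(y, b) ≤ d(y, z) = d(y, core)`, `b = z`, i.e. `z` lies
on a geodesic from `y` to `v`. For `(y, y') ∈ C` choose `(v, α' y') ∈ C` and `(α y, u') ∈ C`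
with `v`, `u'` in the cores; then
`d(α y, v) = d(y, v) - d(y, α y) < d(y', α' y') - d(y', u') + 2δ ≤ 2δ`. -/

section Arc

variable {X : Type*} [TopologicalSpace X]

/-- The parameter interval may be degenerate, so that `{p}` is an arc from `p` to `p`; this lets
arcs be cut at any of their points. -/
def IsArc (A : Set X) (p q : X) : Prop :=
  ∃ (f : ℝ → X) (a b : ℝ), a ≤ b ∧ ContinuousOn f (Icc a b) ∧ InjOn f (Icc a b) ∧
    f a = p ∧ f b = q ∧ f '' Icc a b = A

theorem isArc_image {f : ℝ → X} {a b s t : ℝ} (hf : ContinuousOn f (Icc a b))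
    (hinj : InjOn f (Icc a b)) (hs : a ≤ s) (hst : s ≤ t) (ht : t ≤ b) :
    IsArc (f '' Icc s t) (f s) (f t) :=
  have hsub : Icc s t ⊆ Icc a b := Icc_subset_Icc hs ht
  ⟨f, s, t, hst, hf.mono hsub, hinj.mono hsub, rfl, rfl, rfl⟩

namespace IsArc

variable {A B : Set X} {p q r : X}

theorem left_mem (h : IsArc A p q) : p ∈ A := by
  obtain ⟨f, a, b, hab, -, -, rfl, -, rfl⟩ := h
  exact mem_image_of_mem f (left_mem_Icc.2 hab)

theorem right_mem (h : IsArc A p q) : q ∈ A := by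
  obtain ⟨f, a, b, hab, -, -, -, rfl, rfl⟩ := h
  exact mem_image_of_mem f (right_mem_Icc.2 hab)

theorem symm (h : IsArc A p q) : IsArc A q p := by
  obtain ⟨f, a, b, hab, hf, hinj, rfl, rfl, rfl⟩ := h
  have hneg : MapsTo Neg.neg (Icc (-b) (-a)) (Icc a b) := fun t ht =>
    ⟨le_neg.1 ht.2, neg_le.1 ht.1⟩
  refine ⟨fun t => f (-t), -b, -a, neg_le_neg hab, hf.comp continuous_neg.continuousOn hneg,
    hinj.comp neg_injective.injOn hneg, by simp, by simp, ?_⟩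
  rw [← image_image f Neg.neg, image_neg_Icc, neg_neg, neg_neg]

theorem exists_param (h : IsArc A p q) (a : ℝ) :
    ∃ (f : ℝ → X) (b : ℝ), a ≤ b ∧ ContinuousOn f (Icc a b) ∧ InjOn f (Icc a b) ∧
      f a = p ∧ f b = q ∧ f '' Icc a b = A := by
  obtain ⟨f, a₀, b₀, hab, hf, hinj, rfl, rfl, rfl⟩ := h
  have himg : (fun t => t + (a₀ - a)) '' Icc a (b₀ - a₀ + a) = Icc a₀ b₀ := by
    rw [image_add_const_Icc]; congr 1 <;> ring
  have hmaps : MapsTo (fun t => t + (a₀ - a)) (Icc a (b₀ - a₀ + a)) (Icc a₀ b₀) :=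
    himg ▸ mapsTo_image _ _
  refine ⟨fun t => f (t + (a₀ - a)), b₀ - a₀ + a, by linarith,
    hf.comp (continuous_add_const _).continuousOn hmaps,
    hinj.comp (add_left_injective _).injOn hmaps, by simp, by simp, ?_⟩
  rw [← image_image f, himg]

theorem union (hA : IsArc A p q) (hB : IsArc B q r) (hAB : A ∩ B ⊆ {q}) :
    IsArc (A ∪ B) p r := by
  obtain ⟨f, a, b, hab, hf, hfinj, rfl, rfl, rfl⟩ := hA
  obtain ⟨g, c, hbc, hg, hginj, hgb, rfl, rfl⟩ := hB.exists_param b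
  set h : ℝ → X := fun t => if t ≤ b then f t else g t
  have hhf : EqOn h f (Icc a b) := fun t ht => if_pos ht.2
  have hhg : EqOn h g (Icc b c) := fun t ht => by
    by_cases htb : t ≤ b
    · rw [le_antisymm htb ht.1, hgb]; exact if_pos le_rfl
    · exact if_neg htb
  have hcross : ∀ s ∈ Icc a b, ∀ t ∈ Icc b c, h s = h t → s = t := by
    intro s hs t ht hst
    rw [hhf hs, hhg ht] at hst
    have hq : f s = f b := hAB ⟨mem_image_of_mem f hs, hst ▸ mem_image_of_mem g ht⟩
    have hs' : s = b := hfinj hs (right_mem_Icc.2 hab) hq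
    have ht' : t = b := hginj ht (left_mem_Icc.2 hbc) (by rw [← hst, hq, hgb])
    rw [hs', ht']
  refine ⟨h, a, c, hab.trans hbc, ?_, ?_, hhf (left_mem_Icc.2 hab),
    hhg (right_mem_Icc.2 hbc), ?_⟩
  · rw [← Icc_union_Icc_eq_Icc hab hbc]
    exact ((hf.congr hhf).union_of_isClosed (hg.congr hhg) isClosed_Icc isClosed_Icc)
  · rw [← Icc_union_Icc_eq_Icc hab hbc]
    rintro s (hs | hs) t (ht | ht) hst
    · exact hfinj hs ht (by rwa [← hhf hs, ← hhf ht])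
    · exact hcross s hs t ht hst
    · exact (hcross t ht s hs hst.symm).symm
    · exact hginj hs ht (by rwa [← hhg hs, ← hhg ht])
  · rw [← Icc_union_Icc_eq_Icc hab hbc, image_union, hhf.image_eq, hhg.image_eq]

theorem eq_of_mem (h : IsArc A p p) {x : X} (hx : x ∈ A) : x = p := by
  obtain ⟨f, a, b, hab, -, hinj, hfa, hfb, rfl⟩ := h
  obtain ⟨t, ht, rfl⟩ := hx
  have hba : b = a := hinj (right_mem_Icc.2 hab) (left_mem_Icc.2 hab) (hfb.trans hfa.symm)
  rw [← hfa, show t = a by linarith [ht.1, ht.2]]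

theorem exists_first_mem (h : IsArc A p q) {K : Set X} (hK : IsClosed K)
    (hAK : (A ∩ K).Nonempty) : ∃ z ∈ K, ∃ A₁ ⊆ A, IsArc A₁ p z ∧ A₁ ∩ K ⊆ {z} := by
  obtain ⟨f, a, b, hab, hf, hinj, rfl, rfl, rfl⟩ := h
  set T := Icc a b ∩ f ⁻¹' K
  have hT : IsClosed T := hf.preimage_isClosed_of_isClosed isClosed_Icc hK
  have hTne : T.Nonempty := by
    obtain ⟨-, ⟨t, ht, rfl⟩, htK⟩ := hAK
    exact ⟨t, ht, htK⟩
  have hTbdd : BddBelow T := bddBelow_Icc.mono inter_subset_left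
  have ht₁ : sInf T ∈ T := hT.csInf_mem hTne hTbdd
  refine ⟨f (sInf T), ht₁.2, f '' Icc a (sInf T), image_mono (Icc_subset_Icc_right ht₁.1.2),
    isArc_image hf hinj le_rfl ht₁.1.1 ht₁.1.2, ?_⟩
  rintro _ ⟨⟨σ, hσ, rfl⟩, hσK⟩
  have hσT : σ ∈ T := ⟨Icc_subset_Icc_right ht₁.1.2 hσ, hσK⟩
  rw [le_antisymm hσ.2 (csInf_le hTbdd hσT), mem_singleton_iff]

end IsArc

end Arc

section Core

variable {X : Type} [MetricSpace X]

def OnCycle (p : X) : Prop := ∃ c, IsEmbCycle c ∧ p ∈ c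

def IsCoreArc (E : Set X) : Prop := ∃ a b, a ≠ b ∧ IsArc E a b ∧ OnCycle a ∧ OnCycle b

theorem IsCoreArc.subset_core {E : Set X} (hE : IsCoreArc E) : E ⊆ core X := by
  obtain ⟨_, _, hne, ⟨f, a, b, hab, hf, hinj, rfl, rfl, rfl⟩, ha, hb⟩ := hE
  have hlt : a < b := hab.lt_of_ne (by rintro rfl; exact hne rfl)
  set φ : ℝ → ℝ := fun t => (b - a) * t + a
  have himg : φ '' Icc 0 1 = Icc a b := by
    simp [φ, image_affine_Icc' (sub_pos.2 hlt)]
  have hmaps : MapsTo φ (Icc 0 1) (Icc a b) := himg ▸ mapsTo_image _ _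
  rintro _ ⟨t, ht, rfl⟩
  refine ⟨f ∘ φ, hf.comp (by fun_prop) hmaps, hinj.comp ?_ hmaps, by simpa [φ], by simpa [φ], ?_⟩
  · exact fun s _ t _ h => mul_left_cancel₀ (sub_pos.2 hlt).ne' (add_right_cancel h)
  · rw [image_comp, himg]; exact mem_image_of_mem f ht

theorem mem_core_iff {z : X} : z ∈ core X ↔ ∃ E, IsCoreArc E ∧ z ∈ E := by
  constructor
  · rintro ⟨f, hf, hinj, h0, h1, hz⟩
    have h01 : f 0 ≠ f 1 := fun h =>
      zero_ne_one (hinj (left_mem_Icc.2 zero_le_one) (right_mem_Icc.2 zero_le_one) h)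
    exact ⟨f '' Icc 0 1, ⟨f 0, f 1, h01, isArc_image hf hinj le_rfl zero_le_one le_rfl, h0, h1⟩, hz⟩
  · rintro ⟨E, hE, hz⟩
    exact hE.subset_core hz

theorem IsCoreArc.isClosed {E : Set X} (hE : IsCoreArc E) : IsClosed E := by
  obtain ⟨_, _, -, ⟨f, a, b, -, hf, -, -, -, rfl⟩, -⟩ := hE
  exact (isCompact_Icc.image_of_continuousOn hf).isClosed

variable {m L R E F G : Set X} {p q a b : X}

theorem IsArc.subset_core_of_tails (hm : IsArc m p q) (hpq : p ≠ q) (hL : IsArc L a p)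
    (hR : IsArc R q b) (ha : OnCycle a) (hb : OnCycle b) (hLm : L ∩ m ⊆ {p})
    (hmR : m ∩ R ⊆ {q}) (hLR : Disjoint L R) : m ⊆ core X := by
  have hLmR : IsArc (L ∪ m ∪ R) a b := by
    refine (hL.union hm hLm).union hR ?_
    rw [union_inter_distrib_right, hLR.inter_eq, empty_union]
    exact hmR
  have hab : a ≠ b := by
    rintro rfl
    exact hpq ((hLmR.eq_of_mem (Or.inl (Or.inr hm.left_mem))).trans
      (hLmR.eq_of_mem (Or.inl (Or.inr hm.right_mem))).symm)
  exact subset_union_right.trans (subset_union_left.trans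
    (IsCoreArc.subset_core ⟨a, b, hab, hLmR, ha, hb⟩))

theorem IsArc.subset_core_of_chord (hE : IsCoreArc E) (hm : IsArc m p q) (hpq : p ≠ q)
    (hp : p ∈ E) (hq : q ∈ E) (hmE : m ∩ E ⊆ {p, q}) : m ⊆ core X := by
  obtain ⟨_, _, -, ⟨f, a, b, -, hf, hinj, rfl, rfl, rfl⟩, ha, hb⟩ := hE
  obtain ⟨u, hu, rfl⟩ := hp
  obtain ⟨v, hv, rfl⟩ := hq
  wlog huv : u < v generalizing m u v
  · have hvu : v < u := lt_of_le_of_ne (not_lt.1 huv) (fun h => hpq (h ▸ rfl))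
    exact this v hv u hu hm.symm hpq.symm (by rwa [pair_comm]) hvu
  have hL : Icc a u ⊆ Icc a b := Icc_subset_Icc_right hu.2
  have hR : Icc v b ⊆ Icc a b := Icc_subset_Icc_left hv.1
  refine hm.subset_core_of_tails hpq (isArc_image hf hinj le_rfl hu.1 hu.2)
    (isArc_image hf hinj hv.1 hv.2 le_rfl) ha hb ?_ ?_ ?_
  · rintro z ⟨hzL, hzm⟩
    rcases hmE ⟨hzm, image_mono hL hzL⟩ with rfl | rfl
    · rfl
    · exact absurd ((hinj.mem_image_iff hL hv).1 hzL).2 (not_le.2 huv)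
  · rintro z ⟨hzm, hzR⟩
    rcases hmE ⟨hzm, image_mono hR hzR⟩ with rfl | rfl
    · exact absurd ((hinj.mem_image_iff hR hu).1 hzR).1 (not_le.2 huv)
    · rfl
  · refine disjoint_left.2 ?_
    rintro _ ⟨σ, hσ, rfl⟩ ⟨τ, hτ, hστ⟩
    have := hinj (hR hτ) (hL hσ) hστ
    linarith [hσ.2, hτ.1]

theorem IsArc.subset_core_of_bridge (hF : IsCoreArc F) (hG : IsCoreArc G) (hm : IsArc m p q)
    (hp : p ∈ F) (hpG : p ∉ G) (hq : q ∈ G) (hqF : q ∉ F) (hmFG : m ∩ (F ∪ G) ⊆ {p, q}) :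
    m ⊆ core X := by
  have hmF : m ∩ F ⊆ {p} := fun z hz => (hmFG ⟨hz.1, Or.inl hz.2⟩).resolve_right
    (by rintro rfl; exact hqF hz.2)
  have hmG : m ∩ G ⊆ {q} := fun z hz => (hmFG ⟨hz.1, Or.inr hz.2⟩).resolve_left
    (by rintro rfl; exact hpG hz.2)
  obtain ⟨_, _, -, ⟨f, a, b, -, hf, hinj, rfl, rfl, rfl⟩, ha, -⟩ := hF
  obtain ⟨u, hu, rfl⟩ := hp
  have hLF : f '' Icc a u ⊆ f '' Icc a b := image_mono (Icc_subset_Icc_right hu.2)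
  have hL : IsArc (f '' Icc a u) (f a) (f u) := isArc_image hf hinj le_rfl hu.1 hu.2
  have hLm : f '' Icc a u ∩ m ⊆ {f u} := fun z hz => hmF ⟨hz.2, hLF hz.1⟩
  by_cases hLG : (f '' Icc a u ∩ G).Nonempty
  · obtain ⟨z, hzG, L₁, hL₁L, hL₁, hL₁G⟩ := hL.symm.exists_first_mem hG.isClosed hLG
    have hm' : IsArc (L₁ ∪ m) z q :=
      hL₁.symm.union hm (fun w hw => hLm ⟨hL₁L hw.1, hw.2⟩)
    have hzq : z ≠ q := by
      rintro rfl
      exact hqF (hLF (hL₁L hL₁.right_mem))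
    refine subset_union_right.trans (hm'.subset_core_of_chord hG hzq hzG hq ?_)
    rw [union_inter_distrib_right]
    exact union_subset_union hL₁G hmG
  · obtain ⟨_, _, -, ⟨g, c, d, -, hg, hginj, rfl, rfl, rfl⟩, -, hd⟩ := hG
    obtain ⟨v, hv, rfl⟩ := hq
    have hRG : g '' Icc v d ⊆ g '' Icc c d := image_mono (Icc_subset_Icc_left hv.1)
    refine hm.subset_core_of_tails (fun h => hqF (h ▸ mem_image_of_mem f hu)) hL
      (isArc_image hg hginj hv.1 hv.2 le_rfl) ha hd hLm (fun z hz => hmG ⟨hz.1, hRG hz.2⟩) ?_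
    exact disjoint_left.2 fun z hzL hzR => hLG ⟨z, hzL, hRG hzR⟩

theorem IsArc.subset_core_of_endpoints (hF : IsCoreArc F) (hG : IsCoreArc G)
    (hm : IsArc m p q) (hpq : p ≠ q) (hp : p ∈ F ∪ G) (hq : q ∈ F ∪ G)
    (hmFG : m ∩ (F ∪ G) ⊆ {p, q}) : m ⊆ core X := by
  by_cases hFF : p ∈ F ∧ q ∈ F
  · exact hm.subset_core_of_chord hF hpq hFF.1 hFF.2 fun z hz => hmFG ⟨hz.1, Or.inl hz.2⟩
  by_cases hGG : p ∈ G ∧ q ∈ G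
  · exact hm.subset_core_of_chord hG hpq hGG.1 hGG.2 fun z hz => hmFG ⟨hz.1, Or.inr hz.2⟩
  rcases hp with hpF | hpG <;> rcases hq with hqF | hqG
  · exact absurd ⟨hpF, hqF⟩ hFF
  · exact hm.subset_core_of_bridge hF hG hpF (fun h => hGG ⟨h, hqG⟩) hqG
      (fun h => hFF ⟨hpF, h⟩) hmFG
  · exact hm.subset_core_of_bridge hG hF hpG (fun h => hFF ⟨h, hqF⟩) hqF
      (fun h => hGG ⟨hpG, h⟩) (union_comm F G ▸ hmFG)
  · exact absurd ⟨hpG, hqG⟩ hGG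

theorem mem_core_of_isArc_of_isArc {P Q : Set X} {v w : X} (hP : IsArc P b v) (hQ : IsArc Q b w)
    (hPQ : P ∩ Q ⊆ {b}) (hv : v ∈ core X) (hw : w ∈ core X) : b ∈ core X := by
  by_contra hb
  obtain ⟨F, hF, hvF⟩ := mem_core_iff.1 hv
  obtain ⟨G, hG, hwG⟩ := mem_core_iff.1 hw
  have hU : IsClosed (F ∪ G) := hF.isClosed.union hG.isClosed
  have hUcore : F ∪ G ⊆ core X := union_subset hF.subset_core hG.subset_core
  obtain ⟨p, hp, P₁, hP₁P, hP₁, hP₁U⟩ :=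
    hP.exists_first_mem hU ⟨v, hP.right_mem, Or.inl hvF⟩
  obtain ⟨q, hq, Q₁, hQ₁Q, hQ₁, hQ₁U⟩ :=
    hQ.exists_first_mem hU ⟨w, hQ.right_mem, Or.inr hwG⟩
  have hP₁Q₁ : P₁ ∩ Q₁ ⊆ {b} := (inter_subset_inter hP₁P hQ₁Q).trans hPQ
  have hpq : p ≠ q := by
    rintro rfl
    rw [← hP₁Q₁ ⟨hP₁.right_mem, hQ₁.right_mem⟩] at hb
    exact hb (hUcore hp)
  have hm := hP₁.symm.union hQ₁ hP₁Q₁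
  refine hb (hm.subset_core_of_endpoints hF hG hpq hp hq ?_ (Or.inl hP₁.left_mem))
  rw [union_inter_distrib_right]
  exact union_subset (hP₁U.trans (by simp)) (hQ₁U.trans (by simp))

end Core

section Geodesic

variable {X : Type} [MetricSpace X]

theorem IsGeodesicSpace.exists_isometry (hgeo : IsGeodesicSpace X) (x y : X) :
    ∃ f : ℝ → X, f 0 = x ∧ f (dist x y) = y ∧ Isometry ((Icc 0 (dist x y)).domRestrict f) := by
  obtain ⟨f, hf0, hf1, hf⟩ := hgeo x y
  exact ⟨f, hf0, hf1, Isometry.of_dist_eq fun s t => by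
    rw [Subtype.dist_eq, Real.dist_eq]; exact hf s s.2 t t.2⟩

variable {f h : ℝ → X} {L ℓ : ℝ}

theorem dist_eq_of_isometry_domRestrict (hf : Isometry ((Icc 0 L).domRestrict f)) {s t : ℝ}
    (hs : s ∈ Icc 0 L) (ht : t ∈ Icc 0 L) : dist (f s) (f t) = |s - t| :=
  (hf.dist_eq ⟨s, hs⟩ ⟨t, ht⟩).trans (Real.dist_eq s t)

theorem isArc_image_of_isometry (hf : Isometry ((Icc 0 L).domRestrict f)) {s t : ℝ}
    (hs : 0 ≤ s) (hst : s ≤ t) (ht : t ≤ L) : IsArc (f '' Icc s t) (f s) (f t) :=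
  isArc_image (continuousOn_iff_continuous_domRestrict.2 hf.continuous)
    (injOn_iff_injective.2 hf.injective) hs hst ht

theorem exists_last_common_point (hf : Isometry ((Icc 0 L).domRestrict f))
    (hh : Isometry ((Icc 0 ℓ).domRestrict h)) (h0 : f 0 = h 0) (hℓ : 0 ≤ ℓ) (hℓL : ℓ ≤ L) :
    ∃ t₀ ∈ Icc 0 ℓ, f t₀ = h t₀ ∧ f '' Icc t₀ L ∩ h '' Icc t₀ ℓ ⊆ {f t₀} := by
  have hfc : ContinuousOn f (Icc 0 ℓ) :=
    (continuousOn_iff_continuous_domRestrict.2 hf.continuous).mono (Icc_subset_Icc_right hℓL)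
  have hhc : ContinuousOn h (Icc 0 ℓ) := continuousOn_iff_continuous_domRestrict.2 hh.continuous
  set S := Icc 0 ℓ ∩ (fun t => (f t, h t)) ⁻¹' diagonal X
  have hS : IsClosed S := (hfc.prodMk hhc).preimage_isClosed_of_isClosed isClosed_Icc
    isClosed_diagonal
  have hSbdd : BddAbove S := bddAbove_Icc.mono inter_subset_left
  have ht₀ : sSup S ∈ S := hS.csSup_mem ⟨0, left_mem_Icc.2 hℓ, h0⟩ hSbdd
  refine ⟨sSup S, ht₀.1, ht₀.2, ?_⟩
  rintro _ ⟨⟨σ, hσ, rfl⟩, ⟨τ, hτ, hτσ⟩⟩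
  have hσL : σ ∈ Icc 0 L := ⟨ht₀.1.1.trans hσ.1, hσ.2⟩
  have hτℓ : τ ∈ Icc 0 ℓ := ⟨ht₀.1.1.trans hτ.1, hτ.2⟩
  obtain rfl : σ = τ := by
    have e : |0 - σ| = |0 - τ| := by
      rw [← dist_eq_of_isometry_domRestrict hf (left_mem_Icc.2 (hℓ.trans hℓL)) hσL,
        ← dist_eq_of_isometry_domRestrict hh (left_mem_Icc.2 hℓ) hτℓ, h0, hτσ]
    simpa [abs_of_nonneg hσL.1, abs_of_nonneg hτℓ.1] using e
  have hσS : σ ∈ S := ⟨hτℓ, hτσ.symm⟩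
  rw [le_antisymm (le_csSup hSbdd hσS) hσ.1, mem_singleton_iff]

theorem IsGeodesicSpace.dist_add_dist_eq_of_nearest_core (hgeo : IsGeodesicSpace X)
    {y z v : X} (hz : z ∈ core X) (hv : v ∈ core X) (hyz : dist y z = infDist y (core X)) :
    dist y z + dist z v = dist y v := by
  obtain ⟨f, hf0, hfv, hf⟩ := hgeo.exists_isometry y v
  obtain ⟨h, hh0, hhz, hh⟩ := hgeo.exists_isometry y z
  have hzv : dist y z ≤ dist y v := hyz ▸ infDist_le_dist_of_mem hv
  obtain ⟨t₀, ht₀, hfh, hsep⟩ :=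
    exists_last_common_point hf hh (hf0.trans hh0.symm) dist_nonneg hzv
  have hP : IsArc (f '' Icc t₀ (dist y v)) (f t₀) v := by
    simpa only [hfv] using isArc_image_of_isometry hf ht₀.1 (ht₀.2.trans hzv) le_rfl
  have hQ : IsArc (h '' Icc t₀ (dist y z)) (f t₀) z := by
    simpa only [hfh, hhz] using isArc_image_of_isometry hh ht₀.1 ht₀.2 le_rfl
  have hb : f t₀ ∈ core X := mem_core_of_isArc_of_isArc hP hQ hsep hv hz
  have hdist : ∀ {t}, t ∈ Icc 0 (dist y v) → dist y (f t) = t := fun ht => by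
    rw [← hf0, dist_eq_of_isometry_domRestrict hf (left_mem_Icc.2 dist_nonneg) ht, zero_sub,
      abs_neg, abs_of_nonneg ht.1]
  have ht₀z : t₀ = dist y z := le_antisymm ht₀.2 <| by
    rw [hyz, ← hdist ⟨ht₀.1, ht₀.2.trans hzv⟩]
    exact infDist_le_dist_of_mem hb
  have hfz : f (dist y z) = z := by rw [← ht₀z, hfh, ht₀z, hhz]
  rw [← hfz, ← hfv, dist_eq_of_isometry_domRestrict hf ⟨dist_nonneg, hzv⟩ ⟨dist_nonneg, le_rfl⟩,
    hfz, hfv, abs_sub_comm, abs_of_nonneg (sub_nonneg.2 hzv)]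
  ring

end Geodesic

theorem abs_dist_sub_dist_lt_of_distortion_lt {X X' : Type} [MetricSpace X] [MetricSpace X']
    {C : Set (X × X')} {δ : ℝ} (hC : distortion C < ENNReal.ofReal δ) {x z : X} {x' z' : X'}
    (hx : (x, x') ∈ C) (hz : (z, z') ∈ C) : |dist x z - dist x' z'| < δ := by
  have hle : (edist x z - edist x' z') ⊔ (edist x' z' - edist x z) ≤ distortion C :=
    le_iSup₂_of_le (x, x') hx (le_iSup₂_of_le (z, z') hz le_rfl)
  simp only [edist_dist, ← ENNReal.ofReal_sub _ dist_nonneg, ← ENNReal.ofReal_max,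
    ← neg_sub (dist x z), ← abs_eq_max_neg] at hle
  exact (ENNReal.ofReal_lt_ofReal_iff'.1 (hle.trans_lt hC)).1

theorem overlay_core_projection_general
    {X X' : Type} [MetricSpace X] [MetricSpace X']
    (hX : IsRGraph X)
    (δ : ℝ)
    (C : Set (X × X')) (hC : IsOverlay δ C)
    (α : X → X)
    (hα : ∀ x : X, α x ∈ core X ∧ dist x (α x) = Metric.infDist x (core X) ∧
      ∀ z ∈ core X, dist x z = Metric.infDist x (core X) → z = α x)
    (α' : X' → X')
    (hα' : ∀ x : X', α' x ∈ core X' ∧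
      dist x (α' x) = Metric.infDist x (core X') ∧
      ∀ z ∈ core X', dist x z = Metric.infDist x (core X') → z = α' x) :
    ∀ y y', (y, y') ∈ C → (α y, α' y') ∈ enlargement C (2 * δ) := by
  intro y y' hyy'
  obtain ⟨-, hdist, hcore, hcore', -⟩ := hC
  obtain ⟨hαy, hyαy, -⟩ := hα y
  obtain ⟨hα'y', hy'α'y', -⟩ := hα' y'
  obtain ⟨u', hu', hu'C⟩ := hcore (α y) hαy
  obtain ⟨v, hv, hvC⟩ := hcore' (α' y') hα'y'
  have h₁ := abs_lt.1 (abs_dist_sub_dist_lt_of_distortion_lt hdist hyy' hu'C)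
  have h₂ := abs_lt.1 (abs_dist_sub_dist_lt_of_distortion_lt hdist hyy' hvC)
  have hαy_between := hX.2.1.dist_add_dist_eq_of_nearest_core hαy hv hyαy
  have hproj : dist y' (α' y') ≤ dist y' u' := hy'α'y' ▸ infDist_le_dist_of_mem hu'
  refine ⟨(v, α' y'), hvC, ?_, ?_⟩
  · rw [dist_comm]
    linarith
  · rw [dist_self]
    linarith

/-- if `C` is a `δ`-overlay of two ℝ-graphs in `A_r` with
`δ < r`, then for `(y,y') ∈ C` the core projections satisfy
`(α(y), α(y')) ∈ C_{2δ}`. -/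
theorem overlay_core_projection
    {X X' : Type} [MetricSpace X] [MetricSpace X']
    [MeasurableSpace X] [BorelSpace X] [MeasurableSpace X'] [BorelSpace X']
    (hX : IsRGraph X) (hX' : IsRGraph X')
    (r : ℝ) (hr : 0 < r) (hAr : InAr X r) (hAr' : InAr X' r)
    (δ : ℝ) (hδ : 0 < δ) (hδr : δ < r)
    (C : Set (X × X')) (hC : IsOverlay δ C)
    (α : X → X)
    (hα : ∀ x : X, α x ∈ core X ∧ dist x (α x) = Metric.infDist x (core X) ∧
      ∀ z ∈ core X, dist x z = Metric.infDist x (core X) → z = α x)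
    (α' : X' → X')
    (hα' : ∀ x : X', α' x ∈ core X' ∧
      dist x (α' x) = Metric.infDist x (core X') ∧
      ∀ z ∈ core X', dist x z = Metric.infDist x (core X') → z = α' x) :
    ∀ y y', (y, y') ∈ C → (α y, α' y') ∈ enlargement C (2 * δ) :=
  overlay_core_projection_general hX δ C hC α hα α' hα'
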